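/- Weak compactness of the solution set: the set of all solutions of the dyadic system on [0,∞) with initial data in a fixed closed ball X of ℓ² (with nonnegative components) is compact in C([0,∞); X_w), the space of weakly continuous X-valued functions with the metric induced by the weak distance d_w(a,b) = Σ_j λ^{−j²} |a_j − b_j|/(1 + |a_j − b_j|). -/

import Mathlib

open Real Set MeasureTheory Finset Filter

noncomputable def lam : ℝ := (2:ℝ) ^ ((5:ℝ)/2)

/-- Right-hand side of the dyadic system: `da_j/dt = λ^{j-1} a_{j-1}² − λ^j a_j a_{j+1} + f_j`
with `a_{-1}=0`, forcing `f_0 > 0`, `f_j = 0` for `j ≥ 1`. -/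
noncomputable def dyadicRHS (f0 : ℝ) (a : ℕ → ℝ) : ℕ → ℝ
  | 0 => -(a 0 * a 1) + f0
  | (j+1) => lam ^ j * (a j)^2 - lam ^ (j+1) * a (j+1) * a (j+2)

/-- A weak (= classical) solution of the dyadic system on `[0,∞)`: an `ℓ²`-valued
function whose components are differentiable and satisfy the ODEs. -/
def IsDyadicSolution (f0 : ℝ) (a : ℝ → ℕ → ℝ) : Prop :=
  (∀ t ∈ Ici (0:ℝ), Summable (fun j => (a t j)^2)) ∧
  (∀ j, ∀ t ∈ Ici (0:ℝ), HasDerivWithinAt (fun s => a s j) (dyadicRHS f0 (a t) j) (Ici 0) t)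

/-- The weak distance on `ℓ²`: `d_w(x,y) = Σ_j λ^{−j²} |x_j − y_j| / (1 + |x_j − y_j|)`. -/
noncomputable def dw (x y : ℕ → ℝ) : ℝ :=
  ∑' j : ℕ, lam ^ (-((j:ℝ)^2)) * (|x j - y j| / (1 + |x j - y j|))

open Topology
open scoped NNReal

/-!
Nonnegativity of the data propagates (integrating factor), after which each component obeys
`b_j' ≤ λ^(j-1) b_(j-1)²`; this bounds every component on `[0, T]` uniformly along the sequence,
and since each equation involves only three modes, the components are equi-Lipschitz there.
A diagonal extraction at nonnegative rational times then gives a subsequence converging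
uniformly on compact time intervals in every component, which is convergence in `d_w` because
its weights are summable. The limit satisfies the integrated equations by dominated convergence,
hence is a solution; it stays in `ℓ²` by the energy inequality `(Σ_{j<N} b_j²)' ≤ 2 f₀ b₀`, and
the ball and the sign condition pass to the limit.
-/

theorem le_add_mul_of_hasDerivWithinAt_le {f f' : ℝ → ℝ} {C T : ℝ}
    (hf : ∀ x ∈ Ici (0:ℝ), HasDerivWithinAt f (f' x) (Ici 0) x)
    (hC : ∀ x ∈ Ico 0 T, f' x ≤ C) : ∀ t ∈ Icc 0 T, f t ≤ f 0 + C * t := by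
  refine image_le_of_deriv_right_le_deriv_boundary
    (fun x hx => (hf x hx.1).continuousWithinAt.mono Icc_subset_Ici_self)
    (fun x hx => (hf x hx.1).mono (Ici_subset_Ici.2 hx.1)) (by simp)
    (by fun_prop) (fun x _ => ((hasDerivAt_id x).const_mul C).const_add _ |>.hasDerivWithinAt)
    (by simpa using hC)

theorem continuous_comp_max_of_continuousOn_Ici {f : ℝ → ℝ} {a : ℝ}
    (hf : ContinuousOn f (Ici a)) : Continuous fun s => f (max s a) :=
  hf.comp_continuous (by fun_prop) fun s => le_max_right s a

theorem nonneg_of_hasDerivWithinAt_add_mul_nonneg {f f' v : ℝ → ℝ} (hv : ContinuousOn v (Ici 0))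
    (hf : ∀ x ∈ Ici (0:ℝ), HasDerivWithinAt f (f' x) (Ici 0) x)
    (hpos : ∀ x ∈ Ici (0:ℝ), 0 ≤ f' x + v x * f x) (h0 : 0 ≤ f 0) {t : ℝ} (ht : 0 ≤ t) :
    0 ≤ f t := by
  -- `exp (∫₀ˢ v) * f s` is nondecreasing
  set V : ℝ → ℝ := fun s => ∫ u in (0:ℝ)..s, v (max u 0)
  have hV : ∀ s, HasDerivAt V (v (max s 0)) s := fun s =>
    ((continuous_comp_max_of_continuousOn_Ici hv).integral_hasStrictDerivAt 0 s).hasDerivAt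
  have hmono := le_add_mul_of_hasDerivWithinAt_le (C := 0) (T := t)
    (f := fun s => -(exp (V s) * f s))
    (fun x hx => (((hV x).exp.hasDerivWithinAt).mul (hf x hx)).neg)
    (fun x hx => by
      rw [max_eq_left hx.1]
      nlinarith [exp_pos (V x), hpos x hx.1]) t ⟨ht, le_rfl⟩
  simp only [V, intervalIntegral.integral_same, exp_zero, one_mul, zero_mul, add_zero,
    neg_le_neg_iff] at hmono
  exact nonneg_of_mul_nonneg_right (h0.trans hmono) (exp_pos _)

theorem hasDerivWithinAt_of_eq_add_integral {f g : ℝ → ℝ} (hg : ContinuousOn g (Ici 0))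
    (hf : ∀ t ∈ Ici (0:ℝ), f t = f 0 + ∫ s in (0:ℝ)..t, g s) {t : ℝ} (ht : t ∈ Ici (0:ℝ)) :
    HasDerivWithinAt f (g t) (Ici 0) t := by
  have hF := (((continuous_comp_max_of_continuousOn_Ici hg).integral_hasStrictDerivAt 0 t
    ).hasDerivAt.const_add (f 0)).hasDerivWithinAt (s := Ici 0)
  have heq : ∀ x ∈ Ici (0:ℝ), f x = f 0 + ∫ s in (0:ℝ)..x, g (max s 0) := fun x hx => by
    rw [hf x hx, intervalIntegral.integral_congr fun s hs => ?_]
    rw [Set.uIcc_of_le hx] at hs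
    simp [max_eq_left hs.1]
  simpa [max_eq_left (show (0:ℝ) ≤ t from ht)] using hF.congr heq (heq t ht)

theorem continuousOn_Ici_of_forall_continuousOn_Icc {f : ℝ → ℝ} {a : ℝ}
    (hf : ∀ T, ContinuousOn f (Icc a T)) : ContinuousOn f (Ici a) := fun t ht =>
  ((hf (t + 1)) t ⟨ht, by linarith⟩).mono_of_mem_nhdsWithin <| by
    simpa only [Ici_inter_Iic] using inter_mem_nhdsWithin (Ici a) (Iic_mem_nhds (lt_add_one t))

theorem summable_sq_and_tsum_le_of_tendsto {ι : Type*} {l : Filter ι} [l.NeBot]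
    {u : ι → ℕ → ℝ} {x : ℕ → ℝ} {C : ℝ} (hu : ∀ j, Tendsto (fun k => u k j) l (𝓝 (x j)))
    (hC : ∀ k N, ∑ j ∈ range N, u k j ^ 2 ≤ C) :
    Summable (fun j => x j ^ 2) ∧ ∑' j, x j ^ 2 ≤ C := by
  have hN : ∀ N, ∑ j ∈ range N, x j ^ 2 ≤ C := fun N =>
    le_of_tendsto' (tendsto_finsetSum _ fun j _ => (hu j).pow 2) fun k => hC k N
  have hx := summable_of_sum_range_le (fun j => sq_nonneg (x j)) hN
  exact ⟨hx, hx.tsum_le_of_sum_range_le hN⟩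

theorem summable_sq_sub {x y : ℕ → ℝ} (hx : Summable fun j => x j ^ 2)
    (hy : Summable fun j => y j ^ 2) : Summable fun j => (x j - y j) ^ 2 :=
  ((hx.mul_left 2).add (hy.mul_left 2)).of_nonneg_of_le (fun j => sq_nonneg _) fun j => by
    nlinarith [sq_nonneg (x j + y j)]

theorem le_add_abs_of_tsum_sub_sq_le {x y : ℕ → ℝ} (hxy : Summable fun j => (x j - y j) ^ 2)
    {R : ℝ} (hR : ∑' j, (x j - y j) ^ 2 ≤ R ^ 2) (j : ℕ) : x j ≤ y j + |R| := by
  have := sq_le_sq.1 ((hxy.le_tsum j fun i _ => sq_nonneg _).trans hR)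
  linarith [le_abs_self (x j - y j)]

theorem sum_range_sq_le {x y : ℕ → ℝ} (hxy : Summable fun j => (x j - y j) ^ 2)
    (hy : Summable fun j => y j ^ 2) (N : ℕ) :
    ∑ j ∈ range N, x j ^ 2 ≤ 2 * ∑' j, (x j - y j) ^ 2 + 2 * ∑' j, y j ^ 2 := by
  calc ∑ j ∈ range N, x j ^ 2 ≤ ∑ j ∈ range N, (2 * (x j - y j) ^ 2 + 2 * y j ^ 2) :=
        sum_le_sum fun j _ => by nlinarith [sq_nonneg (x j - 2 * y j)]
    _ = 2 * ∑ j ∈ range N, (x j - y j) ^ 2 + 2 * ∑ j ∈ range N, y j ^ 2 := by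
        rw [sum_add_distrib, mul_sum, mul_sum]
    _ ≤ _ := by
        gcongr
        exacts [hxy.sum_le_tsum _ fun j _ => sq_nonneg _, hy.sum_le_tsum _ fun j _ => sq_nonneg _]

theorem summable_sq_mul_two_rpow (C : ℝ) :
    Summable fun j : ℕ => (C * (2:ℝ) ^ (-(5 * (j:ℝ)) / 6)) ^ 2 := by
  have h : ∀ j : ℕ, ((2:ℝ) ^ (-(5 * (j:ℝ)) / 6)) ^ 2 = ((2:ℝ) ^ (-(5:ℝ) / 3)) ^ j := fun j => by
    rw [← Real.rpow_natCast, ← Real.rpow_natCast, ← Real.rpow_mul zero_le_two,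
      ← Real.rpow_mul zero_le_two]
    ring_nf
  simpa only [mul_pow, h] using (summable_geometric_of_lt_one (by positivity)
    (Real.rpow_lt_one_of_one_lt_of_neg one_lt_two (by norm_num))).mul_left (C ^ 2)

theorem exists_strictMono_forall_tendsto {κ : Type*} [Countable κ] {v : ℕ → κ → ℝ}
    (hv : ∀ i, ∃ B, ∀ k, |v k i| ≤ B) :
    ∃ φ : ℕ → ℕ, StrictMono φ ∧ ∃ L : κ → ℝ, ∀ i, Tendsto (fun k => v (φ k) i) atTop (𝓝 (L i)) := by
  choose B hB using hv
  obtain ⟨L, -, φ, hφ, hL⟩ := (isCompact_univ_pi fun i => isCompact_Icc (a := -B i) (b := B i)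
    ).tendsto_subseq (x := v) fun k i _ => abs_le.1 (hB i k)
  exact ⟨φ, hφ, L, tendsto_pi_nhds.1 hL⟩

theorem uniformCauchySeqOn_of_lipschitzOnWith {X Y : Type*} [PseudoMetricSpace X]
    [PseudoMetricSpace Y] {s D : Set X} (hs : IsCompact s) (hDs : D ⊆ s) (hsD : s ⊆ closure D)
    {w : ℕ → X → Y} {K : ℝ≥0} (hw : ∀ k, LipschitzOnWith K (w k) s)
    (hD : ∀ x ∈ D, CauchySeq fun k => w k x) : UniformCauchySeqOn w atTop s := by
  intro U hU
  obtain ⟨ε, hε, hεU⟩ := Metric.mem_uniformity_dist.1 hU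
  obtain ⟨δ, hδ, hKδ⟩ : ∃ δ > 0, K * δ < ε / 3 :=
    ⟨ε / 3 / (K + 1), by positivity, by
      rw [mul_div_assoc']; exact (div_lt_iff₀ (by positivity)).2 (by nlinarith)⟩
  obtain ⟨F, hFD, hF, hsF⟩ := hs.elim_finite_subcover_image (b := D)
    (c := fun d => Metric.ball d δ) (fun _ _ => Metric.isOpen_ball) fun x hx => by
      obtain ⟨d, hd, hxd⟩ := Metric.mem_closure_iff.1 (hsD hx) δ hδ
      exact mem_biUnion hd (Metric.mem_ball.2 hxd)
  have hnet : ∀ᶠ p in atTop ×ˢ atTop, ∀ d ∈ F, dist (w p.1 d) (w p.2 d) < ε / 3 := by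
    rw [prod_atTop_atTop_eq]
    exact (hF.eventually_all).2 fun d hd => (cauchySeq_iff_tendsto.1 (hD d (hFD hd))).eventually
      (Metric.dist_mem_uniformity (ε := ε / 3) (by positivity))
  filter_upwards [hnet] with p hp x hx
  obtain ⟨d, hd, hxd⟩ := mem_iUnion₂.1 (hsF hx)
  have hclose : ∀ k, dist (w k x) (w k d) < ε / 3 := fun k =>
    ((hw k).dist_le_mul x hx d (hDs (hFD hd))).trans_lt
      ((mul_le_mul_of_nonneg_left (Metric.mem_ball.1 hxd).le K.2).trans_lt hKδ)
  apply hεU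
  calc dist (w p.1 x) (w p.2 x)
      ≤ dist (w p.1 x) (w p.1 d) + dist (w p.1 d) (w p.2 d) + dist (w p.2 d) (w p.2 x) :=
        dist_triangle4 _ _ _ _
    _ < ε / 3 + ε / 3 + ε / 3 := by
        gcongr
        exacts [hclose _, hp d hd, dist_comm (w p.2 x) _ ▸ hclose _]
    _ = ε := by ring

theorem Icc_subset_closure_Icc_inter_range_ratCast {a b : ℝ} (hab : a < b) :
    Icc a b ⊆ closure (Icc a b ∩ range ((↑) : ℚ → ℝ)) := by
  calc Icc a b = closure (Ioo a b) := (closure_Ioo hab.ne).symm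
    _ ⊆ closure (Ioo a b ∩ range ((↑) : ℚ → ℝ)) := closure_minimal
        (Rat.denseRange_cast.open_subset_closure_inter isOpen_Ioo) isClosed_closure
    _ ⊆ _ := closure_mono (inter_subset_inter_left _ Ioo_subset_Icc_self)

theorem exists_strictMono_tendstoUniformlyOn_Icc {ι : Type*} [Countable ι]
    {u : ℕ → ℝ → ι → ℝ} (hbdd : ∀ t ∈ Ici (0:ℝ), ∀ i, ∃ B, ∀ k, |u k t i| ≤ B)
    (hlip : ∀ i T, ∃ K, ∀ k, LipschitzOnWith K (fun t => u k t i) (Icc 0 T)) :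
    ∃ φ : ℕ → ℕ, StrictMono φ ∧ ∃ a : ℝ → ι → ℝ, ∀ i T,
      TendstoUniformlyOn (fun k t => u (φ k) t i) (fun t => a t i) atTop (Icc 0 T) := by
  obtain ⟨φ, hφ, _, hL⟩ := exists_strictMono_forall_tendsto (κ := {q : ℚ // 0 ≤ q} × ι)
    (v := fun k p => u k p.1 p.2) fun p => hbdd p.1 (mem_Ici.2 <| Rat.cast_nonneg.2 p.1.2) p.2
  have hcauchy : ∀ i T, UniformCauchySeqOn (fun k t => u (φ k) t i) atTop (Icc 0 T) := by
    intro i T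
    obtain ⟨K, hK⟩ := hlip i (max T 1)
    refine (uniformCauchySeqOn_of_lipschitzOnWith isCompact_Icc inter_subset_left
      (Icc_subset_closure_Icc_inter_range_ratCast (by positivity)) (fun k => hK (φ k))
      ?_).mono (Icc_subset_Icc_right (le_max_left T 1))
    rintro _ ⟨hq, q, rfl⟩
    exact (hL (⟨q, Rat.cast_nonneg.1 hq.1⟩, i)).cauchySeq
  refine ⟨φ, hφ, fun t i => limUnder atTop fun k => u (φ k) t i, fun i T =>
    (hcauchy i T).tendstoUniformlyOn_of_tendsto fun t ht => ?_⟩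
  exact ((hcauchy i T).cauchySeq ht).tendsto_limUnder

theorem one_lt_lam : 1 < lam := Real.one_lt_rpow one_lt_two (by norm_num)

theorem lam_pos : 0 < lam := zero_lt_one.trans one_lt_lam

theorem lam_rpow_neg_sq_le_one (j : ℕ) : lam ^ (-((j:ℝ) ^ 2)) ≤ 1 :=
  Real.rpow_le_one_of_one_le_of_nonpos one_lt_lam.le (neg_nonpos.2 (sq_nonneg _))

theorem summable_lam_rpow_neg_sq : Summable fun j : ℕ => lam ^ (-((j:ℝ) ^ 2)) := by
  refine (summable_geometric_of_lt_one (inv_nonneg.2 lam_pos.le)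
    (inv_lt_one_of_one_lt₀ one_lt_lam)).of_nonneg_of_le
    (fun j => (Real.rpow_pos_of_pos lam_pos _).le) fun j => ?_
  have hj : (j:ℝ) ≤ (j:ℝ) ^ 2 := by exact_mod_cast Nat.le_self_pow two_ne_zero j
  calc lam ^ (-((j:ℝ) ^ 2)) ≤ lam ^ (-(j:ℝ)) :=
        Real.rpow_le_rpow_of_exponent_le one_lt_lam.le (neg_le_neg hj)
    _ = lam⁻¹ ^ j := by rw [Real.rpow_neg lam_pos.le, Real.rpow_natCast, inv_pow]

theorem exists_dw_lt {ε : ℝ} (hε : 0 < ε) :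
    ∃ N : ℕ, ∃ δ > 0, ∀ x y : ℕ → ℝ, (∀ j < N, |x j - y j| ≤ δ) → dw x y < ε := by
  set w : ℕ → ℝ := fun j => lam ^ (-((j:ℝ) ^ 2))
  obtain ⟨N, hN⟩ := ((tendsto_sum_nat_add w).eventually (gt_mem_nhds (half_pos hε))).exists
  refine ⟨N, ε / (2 * (N + 1)), by positivity, fun x y hxy => ?_⟩
  set d : ℕ → ℝ := fun j => |x j - y j|
  have hw : ∀ j, 0 ≤ w j := fun j => (Real.rpow_pos_of_pos lam_pos _).le
  have hterm : ∀ j, 0 ≤ w j * (d j / (1 + d j)) ∧ w j * (d j / (1 + d j)) ≤ w j ∧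
      w j * (d j / (1 + d j)) ≤ d j := fun j => by
    have hd : 0 ≤ d j := abs_nonneg _
    have hr1 : d j / (1 + d j) ≤ 1 := div_le_one_of_le₀ (by linarith) (by positivity)
    refine ⟨mul_nonneg (hw j) (by positivity), mul_le_of_le_one_right (hw j) hr1, ?_⟩
    calc w j * (d j / (1 + d j)) ≤ 1 * (d j / (1 + d j)) :=
          mul_le_mul_of_nonneg_right (lam_rpow_neg_sq_le_one j) (by positivity)
      _ ≤ d j := by rw [one_mul]; exact div_le_self hd (by linarith)
  have hsum : Summable fun j => w j * (d j / (1 + d j)) :=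
    summable_lam_rpow_neg_sq.of_nonneg_of_le (fun j => (hterm j).1) fun j => (hterm j).2.1
  have hhead : ∑ j ∈ range N, w j * (d j / (1 + d j)) ≤ N * (ε / (2 * (N + 1))) := by
    simpa using sum_le_sum fun j hj => (hterm j).2.2.trans (hxy j (mem_range.1 hj))
  have htail : ∑' i, w (i + N) * (d (i + N) / (1 + d (i + N))) ≤ ∑' i, w (i + N) :=
    ((summable_nat_add_iff N).2 hsum).tsum_le_tsum (fun i => (hterm _).2.1)
      ((summable_nat_add_iff N).2 summable_lam_rpow_neg_sq)
  have hNδ : (N:ℝ) * (ε / (2 * (N + 1))) < ε / 2 := by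
    rw [mul_div_assoc', div_lt_div_iff₀ (by positivity) two_pos]
    nlinarith
  calc dw x y = ∑ j ∈ range N, w j * (d j / (1 + d j))
        + ∑' i, w (i + N) * (d (i + N) / (1 + d (i + N))) := (hsum.sum_add_tsum_nat_add N).symm
    _ < ε / 2 + ε / 2 := add_lt_add_of_le_of_lt (hhead.trans hNδ.le) (htail.trans_lt hN)
    _ = ε := add_halves ε

theorem eventually_dw_lt_of_tendstoUniformlyOn {α ι : Type*} {l : Filter ι} {s : Set α}
    {F : ι → α → ℕ → ℝ} {f : α → ℕ → ℝ}
    (h : ∀ j, TendstoUniformlyOn (fun k t => F k t j) (fun t => f t j) l s) {ε : ℝ}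
    (hε : 0 < ε) : ∀ᶠ k in l, ∀ t ∈ s, dw (F k t) (f t) < ε := by
  obtain ⟨N, δ, hδ, hdw⟩ := exists_dw_lt hε
  filter_upwards [(eventually_all_finset (range N)).2 fun j _ =>
    Metric.tendstoUniformlyOn_iff.1 (h j) δ hδ] with k hk t ht
  exact hdw _ _ fun j hj => by
    simpa only [Real.dist_eq, abs_sub_comm] using (hk j (mem_range.2 hj) t ht).le

noncomputable def dyadicInflow (f0 : ℝ) (c : ℕ → ℝ) : ℕ → ℝ
  | 0 => f0
  | j + 1 => lam ^ j * c j ^ 2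

noncomputable def rhsBound (f0 : ℝ) (d : ℕ → ℝ) (j : ℕ) : ℝ :=
  dyadicInflow f0 d j + lam ^ j * d j * d (j + 1)

-- `b_j' ≤ λ^(j-1) b_(j-1)²` for nonnegative solutions, integrated over `[0, T]`
noncomputable def solBound (f0 : ℝ) (c : ℕ → ℝ) (T : ℝ) : ℕ → ℝ
  | 0 => c 0 + f0 * T
  | j + 1 => c (j + 1) + lam ^ j * solBound f0 c T j ^ 2 * T

section DyadicRHS

variable {f0 : ℝ} {c d : ℕ → ℝ}

theorem dyadicRHS_eq_dyadicInflow_sub (f0 : ℝ) (c : ℕ → ℝ) (j : ℕ) :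
    dyadicRHS f0 c j = dyadicInflow f0 c j - lam ^ j * c j * c (j + 1) := by
  cases j
  · simp only [dyadicRHS, dyadicInflow]; ring
  · rfl

theorem dyadicInflow_nonneg (hf0 : 0 ≤ f0) (c : ℕ → ℝ) (j : ℕ) : 0 ≤ dyadicInflow f0 c j := by
  cases j
  exacts [hf0, mul_nonneg (pow_nonneg lam_pos.le _) (sq_nonneg _)]

theorem dyadicInflow_mono (hc : ∀ i, 0 ≤ c i) (hcd : ∀ i, c i ≤ d i) (j : ℕ) :
    dyadicInflow f0 c j ≤ dyadicInflow f0 d j := by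
  cases j
  exacts [le_rfl, mul_le_mul_of_nonneg_left (pow_le_pow_left₀ (hc _) (hcd _) 2)
    (pow_nonneg lam_pos.le _)]

theorem dyadicRHS_le_dyadicInflow (hc : ∀ i, 0 ≤ c i) (j : ℕ) :
    dyadicRHS f0 c j ≤ dyadicInflow f0 c j := by
  rw [dyadicRHS_eq_dyadicInflow_sub]
  have := mul_nonneg (mul_nonneg (pow_nonneg lam_pos.le j) (hc j)) (hc (j + 1))
  linarith

theorem abs_dyadicRHS_le (hf0 : 0 ≤ f0) (hc : ∀ i, 0 ≤ c i) (hcd : ∀ i, c i ≤ d i) (j : ℕ) :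
    |dyadicRHS f0 c j| ≤ rhsBound f0 d j := by
  rw [dyadicRHS_eq_dyadicInflow_sub]
  have hlam := pow_nonneg lam_pos.le j
  calc _ ≤ |dyadicInflow f0 c j| + |lam ^ j * c j * c (j + 1)| := abs_sub _ _
    _ = dyadicInflow f0 c j + lam ^ j * c j * c (j + 1) := by
        rw [abs_of_nonneg (dyadicInflow_nonneg hf0 c j),
          abs_of_nonneg (mul_nonneg (mul_nonneg hlam (hc j)) (hc _))]
    _ ≤ rhsBound f0 d j := add_le_add (dyadicInflow_mono hc hcd j)
        (mul_le_mul (mul_le_mul_of_nonneg_left (hcd j) hlam) (hcd _) (hc _)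
          (mul_nonneg hlam ((hc j).trans (hcd j))))

theorem continuous_dyadicRHS (f0 : ℝ) (j : ℕ) : Continuous fun c : ℕ → ℝ => dyadicRHS f0 c j := by
  cases j <;> (simp only [dyadicRHS]; fun_prop)

theorem continuousOn_dyadicRHS {c : ℝ → ℕ → ℝ} {s : Set ℝ}
    (hc : ∀ i, ContinuousOn (fun t => c t i) s) (f0 : ℝ) (j : ℕ) :
    ContinuousOn (fun t => dyadicRHS f0 (c t) j) s :=
  (continuous_dyadicRHS f0 j).comp_continuousOn (continuousOn_pi.2 hc)

theorem sum_range_succ_mul_dyadicRHS (f0 : ℝ) (c : ℕ → ℝ) (N : ℕ) :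
    ∑ j ∈ range (N + 1), c j * dyadicRHS f0 c j = f0 * c 0 - lam ^ N * c N ^ 2 * c (N + 1) := by
  induction N with
  | zero => simp only [zero_add, sum_range_one, dyadicRHS, pow_zero]; ring
  | succ N ih => rw [sum_range_succ, ih]; simp only [dyadicRHS]; ring

theorem sum_range_mul_dyadicRHS_le (hf0 : 0 ≤ f0) (hc : ∀ i, 0 ≤ c i) (N : ℕ) :
    ∑ j ∈ range N, c j * dyadicRHS f0 c j ≤ f0 * c 0 := by
  cases N with
  | zero => simpa using mul_nonneg hf0 (hc 0)
  | succ N =>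
    rw [sum_range_succ_mul_dyadicRHS]
    have := mul_nonneg (mul_nonneg (pow_nonneg lam_pos.le N) (sq_nonneg (c N))) (hc (N + 1))
    linarith

theorem solBound_eq (f0 : ℝ) (c : ℕ → ℝ) (T : ℝ) (j : ℕ) :
    solBound f0 c T j = c j + dyadicInflow f0 (solBound f0 c T) j * T := by
  cases j <;> rfl

end DyadicRHS

namespace IsDyadicSolution

variable {f0 : ℝ} {b : ℝ → ℕ → ℝ}

theorem continuousOn (hs : IsDyadicSolution f0 b) (j : ℕ) :
    ContinuousOn (fun t => b t j) (Ici 0) :=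
  fun t ht => (hs.2 j t ht).continuousWithinAt

theorem eq_add_integral (hs : IsDyadicSolution f0 b) (j : ℕ) {t : ℝ} (ht : t ∈ Ici (0:ℝ)) :
    b t j = b 0 j + ∫ s in (0:ℝ)..t, dyadicRHS f0 (b s) j := by
  rw [intervalIntegral.integral_eq_sub_of_hasDeriv_right_of_le ht
    ((hs.continuousOn j).mono Icc_subset_Ici_self)
    (fun x hx => (hs.2 j x hx.1.le).mono (Ioi_subset_Ici_self.trans (Ici_subset_Ici.2 hx.1.le)))
    ((continuousOn_dyadicRHS hs.continuousOn f0 j).mono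
      (by rw [Set.uIcc_of_le (mem_Ici.1 ht)]; exact Set.Icc_subset_Ici_self)).intervalIntegrable]
  ring

theorem nonneg (hs : IsDyadicSolution f0 b) (hf0 : 0 ≤ f0) (h0 : ∀ j, 0 ≤ b 0 j) (j : ℕ) :
    ∀ t ∈ Ici (0:ℝ), 0 ≤ b t j := fun _ ht =>
  -- `b j` decays at most at the rate `λ^j b_{j+1}`; the inflow only increases it
  nonneg_of_hasDerivWithinAt_add_mul_nonneg (v := fun s => lam ^ j * b s (j + 1))
    (continuousOn_const.mul (hs.continuousOn _)) (hs.2 j)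
    (fun x _ => by
      have := dyadicInflow_nonneg hf0 (b x) j
      rw [dyadicRHS_eq_dyadicInflow_sub]; linarith) (h0 j) ht

variable {c : ℕ → ℝ}

theorem le_add_mul (hs : IsDyadicSolution f0 b) (hnn : ∀ j, ∀ t ∈ Ici (0:ℝ), 0 ≤ b t j)
    {j : ℕ} {M T : ℝ} (hM : ∀ x ∈ Ico 0 T, dyadicInflow f0 (b x) j ≤ M) :
    ∀ t ∈ Icc 0 T, b t j ≤ b 0 j + M * t :=
  le_add_mul_of_hasDerivWithinAt_le (hs.2 j) fun x hx =>
    (dyadicRHS_le_dyadicInflow (fun i => hnn i x hx.1) j).trans (hM x hx)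

theorem le_solBound (hs : IsDyadicSolution f0 b) (hf0 : 0 ≤ f0)
    (hnn : ∀ j, ∀ t ∈ Ici (0:ℝ), 0 ≤ b t j) (hc : ∀ j, b 0 j ≤ c j) (T : ℝ) (j : ℕ) :
    ∀ t ∈ Icc 0 T, b t j ≤ solBound f0 c T j := by
  have key : ∀ j, (∀ x ∈ Ico 0 T, dyadicInflow f0 (b x) j ≤ dyadicInflow f0 (solBound f0 c T) j) →
      ∀ t ∈ Icc 0 T, b t j ≤ solBound f0 c T j := fun j hM t ht => by
    have := mul_le_mul_of_nonneg_left ht.2 (dyadicInflow_nonneg hf0 (solBound f0 c T) j)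
    rw [solBound_eq]
    linarith [hs.le_add_mul hnn hM t ht, hc j]
  induction j with
  | zero => exact key 0 fun _ _ => le_rfl
  | succ j ih =>
    exact key (j + 1) fun x hx => mul_le_mul_of_nonneg_left
      (pow_le_pow_left₀ (hnn j x hx.1) (ih x (Ico_subset_Icc_self hx)) 2) (pow_nonneg lam_pos.le j)

theorem lipschitzOnWith (hs : IsDyadicSolution f0 b) (hf0 : 0 ≤ f0)
    (hnn : ∀ j, ∀ t ∈ Ici (0:ℝ), 0 ≤ b t j) (hc : ∀ j, b 0 j ≤ c j) (T : ℝ) (j : ℕ) :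
    LipschitzOnWith (rhsBound f0 (solBound f0 c T) j).toNNReal (fun t => b t j) (Icc 0 T) :=
  (convex_Icc 0 T).lipschitzOnWith_of_nnnorm_hasDerivWithin_le
    (fun x hx => (hs.2 j x hx.1).mono Icc_subset_Ici_self) fun x hx => by
      rw [← NNReal.coe_le_coe, coe_nnnorm, Real.coe_toNNReal']
      exact le_max_of_le_left (abs_dyadicRHS_le hf0 (fun i => hnn i x hx.1)
        (fun i => hs.le_solBound hf0 hnn hc T i x hx) j)

theorem sum_sq_le (hs : IsDyadicSolution f0 b) (hf0 : 0 ≤ f0)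
    (hnn : ∀ j, ∀ t ∈ Ici (0:ℝ), 0 ≤ b t j) {M T : ℝ} (hM : ∀ x ∈ Ico 0 T, b x 0 ≤ M) (N : ℕ) :
    ∀ t ∈ Icc 0 T, ∑ j ∈ range N, b t j ^ 2 ≤ ∑ j ∈ range N, b 0 j ^ 2 + 2 * f0 * M * t := by
  refine le_add_mul_of_hasDerivWithinAt_le
    (f' := fun x => ∑ j ∈ range N, 2 * (b x j * dyadicRHS f0 (b x) j))
    (fun x hx => HasDerivWithinAt.fun_sum fun j _ => by
      simpa [mul_assoc] using (hs.2 j x hx).fun_pow 2) fun x hx => ?_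
  rw [← mul_sum, mul_assoc]
  gcongr
  exact (sum_range_mul_dyadicRHS_le hf0 (fun i => hnn i x hx.1) N).trans
    (mul_le_mul_of_nonneg_left (hM x hx) hf0)

end IsDyadicSolution

theorem hasDerivWithinAt_dyadicRHS_of_tendstoUniformlyOn {f0 : ℝ} {u : ℕ → ℝ → ℕ → ℝ}
    {a : ℝ → ℕ → ℝ} (hu : ∀ k, IsDyadicSolution f0 (u k))
    (hlim : ∀ j T, TendstoUniformlyOn (fun k t => u k t j) (fun t => a t j) atTop (Icc 0 T))
    (hbound : ∀ j (T : ℝ), ∃ D, ∀ k, ∀ t ∈ Icc 0 T, |dyadicRHS f0 (u k t) j| ≤ D) (j : ℕ) :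
    ∀ t ∈ Ici (0:ℝ), HasDerivWithinAt (fun s => a s j) (dyadicRHS f0 (a t) j) (Ici 0) t := by
  have hpt : ∀ i, ∀ t ∈ Ici (0:ℝ), Tendsto (fun k => u k t i) atTop (𝓝 (a t i)) :=
    fun i t ht => (hlim i t).tendsto_at ⟨ht, le_rfl⟩
  have hcont : ∀ i, ContinuousOn (fun t => a t i) (Ici 0) := fun i =>
    continuousOn_Ici_of_forall_continuousOn_Icc fun T => (hlim i T).continuousOn
      (Frequently.of_forall fun k => ((hu k).continuousOn i).mono Icc_subset_Ici_self)
  refine fun t ht => hasDerivWithinAt_of_eq_add_integral (continuousOn_dyadicRHS hcont f0 j)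
    (fun t ht => ?_) ht
  obtain ⟨D, hD⟩ := hbound j t
  have hIoc : uIoc 0 t ⊆ Icc 0 t := by rw [uIoc_of_le ht]; exact Ioc_subset_Icc_self
  have hint : Tendsto (fun k => ∫ s in (0:ℝ)..t, dyadicRHS f0 (u k s) j) atTop
      (𝓝 (∫ s in (0:ℝ)..t, dyadicRHS f0 (a s) j)) :=
    intervalIntegral.tendsto_integral_filter_of_dominated_convergence (fun _ => D)
      (Eventually.of_forall fun k => ((continuousOn_dyadicRHS (hu k).continuousOn f0 j).mono
        (hIoc.trans Icc_subset_Ici_self)).aestronglyMeasurable measurableSet_uIoc)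
      (Eventually.of_forall fun k => ae_of_all _ fun s hs => hD k s (hIoc hs))
      intervalIntegrable_const
      (ae_of_all _ fun s hs => ((continuous_dyadicRHS f0 j).tendsto _).comp
        (tendsto_pi_nhds.2 fun i => hpt i s (hIoc hs).1))
  refine tendsto_nhds_unique (hpt j t ht) ?_
  simpa only [← (hu _).eq_add_integral j ht] using (hpt j 0 self_mem_Ici).add hint

theorem weak_compactness_general (f0 : ℝ) (hf0 : 0 < f0) (R : ℝ)
    (ahat : ℕ → ℝ)
    (hahat : ∀ j, ahat j = (2:ℝ)^((5:ℝ)/12) * Real.sqrt f0 * (2:ℝ)^(-(5*(j:ℝ))/6))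
    (aseq : ℕ → ℝ → ℕ → ℝ)
    (hsol : ∀ k, IsDyadicSolution f0 (aseq k))
    (hX : ∀ k, (∑' j, (aseq k 0 j - ahat j)^2) ≤ R^2)
    (hpos : ∀ k j, 0 ≤ aseq k 0 j) :
    ∃ φ : ℕ → ℕ, StrictMono φ ∧ ∃ a : ℝ → ℕ → ℝ,
      IsDyadicSolution f0 a ∧ (∑' j, (a 0 j - ahat j)^2) ≤ R^2 ∧ (∀ j, 0 ≤ a 0 j) ∧
      ∀ ε : ℝ, 0 < ε → ∀ T : ℝ, 0 < T → ∃ K : ℕ, ∀ k, K ≤ k → ∀ t ∈ Icc (0:ℝ) T,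
        dw (aseq (φ k) t) (a t) < ε := by
  have hahat2 : Summable fun j => ahat j ^ 2 := by
    simpa only [← hahat] using summable_sq_mul_two_rpow ((2:ℝ) ^ ((5:ℝ) / 12) * √f0)
  have hball k : Summable fun j => (aseq k 0 j - ahat j) ^ 2 :=
    summable_sq_sub ((hsol k).1 0 self_mem_Ici) hahat2
  have hnn k := (hsol k).nonneg hf0.le (hpos k)
  have hc k := le_add_abs_of_tsum_sub_sq_le (hball k) (hX k)
  have hle k := (hsol k).le_solBound hf0.le (hnn k) (hc k)
  obtain ⟨φ, hφ, a, ha⟩ := exists_strictMono_tendstoUniformlyOn_Icc (u := aseq)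
    (fun t ht j => ⟨_, fun k =>
      (abs_of_nonneg (hnn k j t ht)).trans_le (hle k t j t ⟨ht, le_rfl⟩)⟩)
    fun j T => ⟨_, fun k => (hsol k).lipschitzOnWith hf0.le (hnn k) (hc k) T j⟩
  have hpt : ∀ j, ∀ t ∈ Ici (0:ℝ), Tendsto (fun k => aseq (φ k) t j) atTop (𝓝 (a t j)) :=
    fun j t ht => (ha j t).tendsto_at ⟨ht, le_rfl⟩
  refine ⟨φ, hφ, a, ⟨fun t ht => ?_, ?_⟩, ?_, fun j => ge_of_tendsto' (hpt j 0 self_mem_Ici)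
    fun k => hpos _ j, fun ε hε T _ =>
    eventually_atTop.1 (eventually_dw_lt_of_tendstoUniformlyOn (fun j => ha j T) hε)⟩
  · refine (summable_sq_and_tsum_le_of_tendsto (hpt · t ht) (C := 2 * R ^ 2 +
      2 * ∑' j, ahat j ^ 2 + 2 * f0 * solBound f0 (fun j => ahat j + |R|) t 0 * t)
      fun k N => ?_).1
    have := (hsol (φ k)).sum_sq_le hf0.le (hnn _)
      (fun x hx => hle (φ k) t 0 x (Ico_subset_Icc_self hx)) N t ⟨ht, le_rfl⟩
    linarith [sum_range_sq_le (hball (φ k)) hahat2 N, hX (φ k)]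
  · exact hasDerivWithinAt_dyadicRHS_of_tendstoUniformlyOn (fun k => hsol (φ k)) ha
      fun j T => ⟨_, fun k t ht => abs_dyadicRHS_le hf0.le (fun i => hnn (φ k) i t ht.1)
        (fun i => hle (φ k) T i t ht) j⟩
  · exact (summable_sq_and_tsum_le_of_tendsto (fun j => (hpt j 0 self_mem_Ici).sub_const _)
      fun k N => ((hball (φ k)).sum_le_tsum _ fun j _ => sq_nonneg _).trans (hX _)).2

theorem weak_compactness (f0 : ℝ) (hf0 : 0 < f0) (R : ℝ) (hR : 0 ≤ R)
    (ahat : ℕ → ℝ)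
    (hahat : ∀ j, ahat j = (2:ℝ)^((5:ℝ)/12) * Real.sqrt f0 * (2:ℝ)^(-(5*(j:ℝ))/6))
    (aseq : ℕ → ℝ → ℕ → ℝ)
    (hsol : ∀ k, IsDyadicSolution f0 (aseq k))
    (hX : ∀ k, (∑' j, (aseq k 0 j - ahat j)^2) ≤ R^2)
    (hpos : ∀ k j, 0 ≤ aseq k 0 j) :
    ∃ φ : ℕ → ℕ, StrictMono φ ∧ ∃ a : ℝ → ℕ → ℝ,
      IsDyadicSolution f0 a ∧ (∑' j, (a 0 j - ahat j)^2) ≤ R^2 ∧ (∀ j, 0 ≤ a 0 j) ∧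
      ∀ ε : ℝ, 0 < ε → ∀ T : ℝ, 0 < T → ∃ K : ℕ, ∀ k, K ≤ k → ∀ t ∈ Icc (0:ℝ) T,
        dw (aseq (φ k) t) (a t) < ε :=
  weak_compactness_general f0 hf0 R ahat hahat aseq hsol hX hpos
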